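/- arXiv:1710.05425 — 6 statements merged into one kernel-verified Lean document; each statement's English description precedes it below -/
import Mathlib

section
/- Let (G, Λ) be a deterministic reaction system on n species and let c ∈ ℝ^n. If c is a complex balanced state of (G, Λ), then the active subnetwork G_c of (G, Λ) at c is weakly reversible. -/
open scoped ENNReal NNReal BigOperators Classical

noncomputable section

namespace CRN

/-- A complex: a vector in `ℤ_{≥0}^n`. -/
abbrev Cplx (n : ℕ) := Fin n → ℕ

/-- A reaction: an ordered pair of complexes (source, target). -/
abbrev Reaction (n : ℕ) := Cplx n × Cplx n

/-- A reaction network on `n` species: a finite set of reactions, each with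
distinct source and target. -/
structure Network (n : ℕ) where
  R : Finset (Reaction n)
  ne_src_tgt : ∀ r ∈ R, r.1 ≠ r.2

/-- The complexes of a network: vectors occurring as source or target of some reaction. -/
def Network.C {n : ℕ} (G : Network n) : Finset (Cplx n) :=
  G.R.image Prod.fst ∪ G.R.image Prod.snd

/-- A network is reversible if `y → y' ∈ R` implies `y' → y ∈ R`. -/
def Network.Reversible {n : ℕ} (G : Network n) : Prop :=
  ∀ r ∈ G.R, (r.2, r.1) ∈ G.R

/-- A network is weakly reversible if every reaction is contained in a closed
directed path `y_1 → y_2 → ⋯ → y_k` with `k ≥ 2` and `y_1 = y_k`. -/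
def Network.WeaklyReversible {n : ℕ} (G : Network n) : Prop :=
  ∀ r ∈ G.R, ∃ (k : ℕ) (ys : ℕ → Cplx n), 2 ≤ k ∧ ys 0 = ys (k - 1) ∧
    (∀ i, i < k - 1 → (ys i, ys (i + 1)) ∈ G.R) ∧
    (∃ i, i < k - 1 ∧ (ys i, ys (i + 1)) = r)

/-- Embedding of a complex into `ℝ^n`. -/
def toR {n : ℕ} (y : Cplx n) : Fin n → ℝ := fun i => (y i : ℝ)

/-- Embedding of a complex into `ℤ^n`. -/
def toZ {n : ℕ} (y : Cplx n) : Fin n → ℤ := fun i => (y i : ℤ)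

/-- Deterministic kinetics: a nonnegative rate function for each reaction,
zero for pairs which are not reactions of the network. -/
structure DetKin {n : ℕ} (G : Network n) where
  rate : Reaction n → (Fin n → ℝ) → ℝ
  nonneg : ∀ r z, 0 ≤ rate r z
  zero_off : ∀ r, r ∉ G.R → ∀ z, rate r z = 0

/-- Stochastic kinetics: a nonnegative rate function on `ℤ^n` for each reaction,
zero for pairs which are not reactions of the network. -/
structure StochKin {n : ℕ} (G : Network n) where
  rate : Reaction n → (Fin n → ℤ) → ℝ≥0
  zero_off : ∀ r, r ∉ G.R → ∀ x, rate r x = 0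

namespace Det

variable {n : ℕ} {G : Network n}

/-- `c` is an equilibrium: `∑_{y→y'∈R} (y'−y) λ_{y→y'}(c) = 0`. -/
def IsEquilibrium (Λ : DetKin G) (c : Fin n → ℝ) : Prop :=
  ∑ r ∈ G.R, Λ.rate r c • (toR r.2 - toR r.1) = 0

/-- `c` is reaction balanced (detailed balanced). -/
def ReactionBalanced (Λ : DetKin G) (c : Fin n → ℝ) : Prop :=
  ∀ y ∈ G.C, ∀ y' ∈ G.C, Λ.rate (y, y') c = Λ.rate (y', y) c

/-- `c` is complex balanced. -/
def ComplexBalanced (Λ : DetKin G) (c : Fin n → ℝ) : Prop :=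
  ∀ y ∈ G.C, ∑ y' ∈ G.C, Λ.rate (y, y') c = ∑ y' ∈ G.C, Λ.rate (y', y) c

/-- `c` is reaction vector balanced. -/
def RVBalanced (Λ : DetKin G) (c : Fin n → ℝ) : Prop :=
  ∀ ξ : Fin n → ℝ,
    ∑ r ∈ G.R.filter (fun r => toR r.2 - toR r.1 = ξ), Λ.rate r c =
    ∑ r ∈ G.R.filter (fun r => toR r.2 - toR r.1 = -ξ), Λ.rate r c

/-- `c` is cycle balanced. -/
def CycleBalanced (Λ : DetKin G) (c : Fin n → ℝ) : Prop :=
  ∀ j : ℕ, 3 ≤ j → ∀ ys : ℕ → Cplx n,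
    (∀ i < j, ys i ∈ G.C) →
    (∀ i < j, ∀ k < j, ys i = ys k → i = k) →
    ∏ i ∈ Finset.range j, Λ.rate (ys i, ys ((i + 1) % j)) c =
    ∏ i ∈ Finset.range j, Λ.rate (ys ((i + 1) % j), ys i) c

/-- The active subnetwork at a state `c`: the reactions with positive rate at `c`. -/
def activeSub (Λ : DetKin G) (c : Fin n → ℝ) : Network n :=
  ⟨G.R.filter (fun r => 0 < Λ.rate r c),
   fun r hr => G.ne_src_tgt r (Finset.mem_filter.mp hr).1⟩

end Det

/-- The stoichiometric subspace: the span of the reaction vectors. -/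
def stoichSubspace {n : ℕ} (G : Network n) : Submodule ℝ (Fin n → ℝ) :=
  Submodule.span ℝ ((fun r : Reaction n => toR r.2 - toR r.1) '' (G.R : Set (Reaction n)))

/-- The stoichiometric compatibility class of `v`: `(v + S) ∩ ℝ^n_{≥0}`. -/
def compatClass {n : ℕ} (G : Network n) (v : Fin n → ℝ) : Set (Fin n → ℝ) :=
  {z | z - v ∈ stoichSubspace G ∧ ∀ i, 0 ≤ z i}

/-- A measure on `ℤ^n`: a function with values in `[0,∞]`. -/
abbrev Meas (n : ℕ) := (Fin n → ℤ) → ℝ≥0∞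

namespace Stoch

variable {n : ℕ} {G : Network n}

def IsDistribution (π : Meas n) : Prop := ∑' x, π x = 1

def SigmaFinite (π : Meas n) : Prop := ∀ x, π x < ⊤

def FiniteMeas (π : Meas n) : Prop := ∑' x, π x < ⊤

def supp (π : Meas n) : Set (Fin n → ℤ) := {x | π x ≠ 0}

/-- `π` is within `Γ` if its support is nonempty and contained in `Γ`. -/
def Within (π : Meas n) (Γ : Set (Fin n → ℤ)) : Prop := (supp π).Nonempty ∧ supp π ⊆ Γ

/-- `π` is a stationary measure. -/
def Stationary (Λ : StochKin G) (π : Meas n) : Prop :=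
  ∀ x : Fin n → ℤ,
    π x * ∑ r ∈ G.R, (Λ.rate r x : ℝ≥0∞) =
    ∑ r ∈ G.R, π (x + toZ r.1 - toZ r.2) * (Λ.rate r (x + toZ r.1 - toZ r.2) : ℝ≥0∞)

def StationaryDistribution (Λ : StochKin G) (π : Meas n) : Prop :=
  IsDistribution π ∧ Stationary Λ π

/-- `π` is a reaction balanced measure. -/
def ReactionBalancedM (Λ : StochKin G) (π : Meas n) : Prop :=
  ∀ x : Fin n → ℤ, ∀ y ∈ G.C, ∀ y' ∈ G.C,
    π x * (Λ.rate (y, y') x : ℝ≥0∞) =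
    π (x + toZ y' - toZ y) * (Λ.rate (y', y) (x + toZ y' - toZ y) : ℝ≥0∞)

/-- `π` is a complex balanced measure. -/
def ComplexBalancedM (Λ : StochKin G) (π : Meas n) : Prop :=
  ∀ x : Fin n → ℤ, ∀ y ∈ G.C,
    π x * ∑ y' ∈ G.C, (Λ.rate (y, y') x : ℝ≥0∞) =
    ∑ y' ∈ G.C, π (x + toZ y' - toZ y) * (Λ.rate (y', y) (x + toZ y' - toZ y) : ℝ≥0∞)

/-- `π` is a reaction vector balanced measure (detailed balanced as a Markov chain). -/
def RVBalancedM (Λ : StochKin G) (π : Meas n) : Prop :=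
  ∀ x : Fin n → ℤ, ∀ ξ : Fin n → ℤ,
    π x * ∑ r ∈ G.R.filter (fun r => toZ r.2 - toZ r.1 = ξ), (Λ.rate r x : ℝ≥0∞) =
    π (x + ξ) * ∑ r ∈ G.R.filter (fun r => toZ r.2 - toZ r.1 = -ξ), (Λ.rate r (x + ξ) : ℝ≥0∞)

/-- `π` is a cycle balanced measure. -/
def CycleBalancedM (Λ : StochKin G) (π : Meas n) : Prop :=
  ∀ x : Fin n → ℤ, ∀ j : ℕ, 3 ≤ j → ∀ ys : ℕ → Cplx n,
    (∀ i < j, ys i ∈ G.C) →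
    (∀ i < j, ∀ k < j, ys i = ys k → i = k) →
    ∏ i ∈ Finset.range j,
      π (x + toZ (ys i)) * (Λ.rate (ys i, ys ((i + 1) % j)) (x + toZ (ys i)) : ℝ≥0∞) =
    ∏ i ∈ Finset.range j,
      π (x + toZ (ys ((i + 1) % j))) *
        (Λ.rate (ys ((i + 1) % j), ys i) (x + toZ (ys ((i + 1) % j))) : ℝ≥0∞)

/-- One step of the dynamics: from `u`, an active reaction takes `u` to `u + y' - y`. -/
def Step (Λ : StochKin G) (u v : Fin n → ℤ) : Prop :=
  ∃ r ∈ G.R, 0 < Λ.rate r u ∧ v = u + toZ r.2 - toZ r.1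

/-- `u` is accessible from `x`. -/
def Accessible (Λ : StochKin G) (x u : Fin n → ℤ) : Prop :=
  Relation.ReflTransGen (Step Λ) x u

/-- `Γ` is an irreducible component. -/
def IrredComp (Λ : StochKin G) (Γ : Set (Fin n → ℤ)) : Prop :=
  Γ.Nonempty ∧ ∀ x ∈ Γ, ∀ u, Accessible Λ x u ↔ u ∈ Γ

/-- `Γ` is active: every reaction is active at some state of `Γ`. -/
def ActiveSet (Λ : StochKin G) (Γ : Set (Fin n → ℤ)) : Prop :=
  ∀ r ∈ G.R, ∃ x ∈ Γ, 0 < Λ.rate r x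

/-- The active subnetwork of `(G,Λ)` in `Γ`. -/
def activeSubnet (Λ : StochKin G) (Γ : Set (Fin n → ℤ)) : Network n :=
  ⟨G.R.filter (fun r => ∃ x ∈ Γ, 0 < Λ.rate r x),
   fun r hr => G.ne_src_tgt r (Finset.mem_filter.mp hr).1⟩

/-- `(G,Λ)` is a reaction balanced stochastic reaction system. -/
def SysReactionBalanced (Λ : StochKin G) : Prop :=
  (∃ π Γ, StationaryDistribution Λ π ∧ IrredComp Λ Γ ∧ ActiveSet Λ Γ ∧ Within π Γ) ∧
  ∀ π Γ, StationaryDistribution Λ π → IrredComp Λ Γ → ActiveSet Λ Γ → Within π Γ →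
    ReactionBalancedM Λ π

/-- `(G,Λ)` is a complex balanced stochastic reaction system. -/
def SysComplexBalanced (Λ : StochKin G) : Prop :=
  (∃ π Γ, StationaryDistribution Λ π ∧ IrredComp Λ Γ ∧ ActiveSet Λ Γ ∧ Within π Γ) ∧
  ∀ π Γ, StationaryDistribution Λ π → IrredComp Λ Γ → ActiveSet Λ Γ → Within π Γ →
    ComplexBalancedM Λ π

/-- `(G,Λ)` is a reaction vector balanced stochastic reaction system. -/
def SysRVBalanced (Λ : StochKin G) : Prop :=
  (∃ π Γ, StationaryDistribution Λ π ∧ IrredComp Λ Γ ∧ ActiveSet Λ Γ ∧ Within π Γ) ∧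
  ∀ π Γ, StationaryDistribution Λ π → IrredComp Λ Γ → ActiveSet Λ Γ → Within π Γ →
    RVBalancedM Λ π

/-- `(G,Λ)` is a cycle balanced stochastic reaction system. -/
def SysCycleBalanced (Λ : StochKin G) : Prop :=
  (∃ π Γ, StationaryDistribution Λ π ∧ IrredComp Λ Γ ∧ ActiveSet Λ Γ ∧ Within π Γ) ∧
  ∀ π Γ, StationaryDistribution Λ π → IrredComp Λ Γ → ActiveSet Λ Γ → Within π Γ →
    CycleBalancedM Λ π

end Stoch

/-- A mass action system: a network together with positive rate constants
(set to `0` off the reaction set, per the usual convention). -/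
structure MASystem (n : ℕ) where
  G : Network n
  κ : Reaction n → ℝ
  pos : ∀ r ∈ G.R, 0 < κ r
  zero_off : ∀ r, r ∉ G.R → κ r = 0

/-- The deterministic mass action kinetics: `λ_{y→y'}(z) = 1_{{z ≥ 0}} κ_{y→y'} z^y`. -/
def MASystem.detKin {n : ℕ} (S : MASystem n) : DetKin S.G where
  rate r z := (if ∀ i, 0 ≤ z i then (1 : ℝ) else 0) * S.κ r * ∏ i, z i ^ (r.1 i)
  nonneg r z := by
    have hκ : 0 ≤ S.κ r := by
      by_cases h : r ∈ S.G.R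
      · exact le_of_lt (S.pos r h)
      · exact le_of_eq (S.zero_off r h).symm
    by_cases h : ∀ i, 0 ≤ z i
    · have hp : (0 : ℝ) ≤ ∏ i, z i ^ (r.1 i) :=
        Finset.prod_nonneg fun i _ => pow_nonneg (h i) _
      simp only [if_pos h, one_mul]
      exact mul_nonneg hκ hp
    · simp [if_neg h]
  zero_off r hr z := by simp [S.zero_off r hr]

/-- The stochastic mass action kinetics:
`λ_{y→y'}(x) = κ_{y→y'} · (x!/(x−y)!) · 1_{{x ≥ y}}`. -/
def MASystem.stochKin {n : ℕ} (S : MASystem n) : StochKin S.G where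
  rate r x :=
    if ∀ i, (r.1 i : ℤ) ≤ x i then
      (S.κ r).toNNReal *
        (((∏ i, ∏ j ∈ Finset.range (r.1 i), (x i - (j : ℤ))).toNat : ℝ≥0))
    else 0
  zero_off r hr x := by simp [S.zero_off r hr]

namespace Det

/-- `(G,K_D)` is a reaction balanced deterministic mass action system. -/
def SysReactionBalanced {n : ℕ} (S : MASystem n) : Prop :=
  (∃ c : Fin n → ℝ, (∀ i, 0 < c i) ∧ IsEquilibrium S.detKin c) ∧
  ∀ c : Fin n → ℝ, (∀ i, 0 < c i) → IsEquilibrium S.detKin c → ReactionBalanced S.detKin c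

/-- `(G,K_D)` is a complex balanced deterministic mass action system. -/
def SysComplexBalanced {n : ℕ} (S : MASystem n) : Prop :=
  (∃ c : Fin n → ℝ, (∀ i, 0 < c i) ∧ IsEquilibrium S.detKin c) ∧
  ∀ c : Fin n → ℝ, (∀ i, 0 < c i) → IsEquilibrium S.detKin c → ComplexBalanced S.detKin c

/-- `(G,K_D)` is a cycle balanced deterministic mass action system. -/
def SysCycleBalanced {n : ℕ} (S : MASystem n) : Prop :=
  (∃ c : Fin n → ℝ, (∀ i, 0 < c i) ∧ IsEquilibrium S.detKin c) ∧
  ∀ c : Fin n → ℝ, (∀ i, 0 < c i) → IsEquilibrium S.detKin c → CycleBalanced S.detKin c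

end Det

end CRN

open CRN

/-- A `ReflTransGen` chain can be realized as an indexed finite path. -/
lemma exists_path {α : Type*} {S : α → α → Prop} {a b : α}
    (h : Relation.ReflTransGen S a b) :
    ∃ m : ℕ, ∃ p : ℕ → α, p 0 = a ∧ p m = b ∧ ∀ i < m, S (p i) (p (i + 1)) := by
  induction h with
  | refl => exact ⟨0, fun _ => a, rfl, rfl, fun i hi => absurd hi (Nat.not_lt_zero i)⟩
  | @tail b' c' hab hbc ih =>
    obtain ⟨m, p, h0, hm, hs⟩ := ih
    refine ⟨m + 1, fun i => if i ≤ m then p i else c', by simpa using h0, by simp, ?_⟩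
    intro i hi
    rcases lt_or_eq_of_le (Nat.lt_succ_iff.mp hi) with hlt | heq
    · have h1 : i ≤ m := le_of_lt hlt
      have h2 : i + 1 ≤ m := hlt
      simpa [h1, h2] using hs i hlt
    · subst heq
      simp only [le_refl, if_pos, Nat.lt_irrefl]
      have : ¬ (i + 1 ≤ i) := by omega
      simpa [this, hm] using hbc

/-- If `c` is a complex balanced state, the active subnetwork at `c`
is weakly reversible. -/
theorem complex_balanced_active_subnetwork_weakly_reversible {n : ℕ} {G : Network n}
    (Λ : DetKin G) (c : Fin n → ℝ) (h : Det.ComplexBalanced Λ c) :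
    (Det.activeSub Λ c).WeaklyReversible := by
  intro r hr
  obtain ⟨hrR, hrpos⟩ := Finset.mem_filter.mp hr
  set y := r.1 with hy
  set y' := r.2 with hy'
  -- the step relation of the active subnetwork, on complexes
  set S : Cplx n → Cplx n → Prop :=
    fun a b => (a, b) ∈ G.R ∧ 0 < Λ.rate (a, b) c with hS
  have hyC : y ∈ G.C := Finset.mem_union_left _ (Finset.mem_image_of_mem _ hrR)
  have hy'C : y' ∈ G.C := Finset.mem_union_right _ (Finset.mem_image_of_mem _ hrR)
  have htgtC : ∀ a b : Cplx n, (a, b) ∈ G.R → b ∈ G.C := fun a b hab =>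
    Finset.mem_union_right _ (Finset.mem_image_of_mem _ hab)
  -- key claim : y is reachable from y'
  have hreach : Relation.ReflTransGen S y' y := by
    by_contra hny
    set A : Finset (Cplx n) := G.C.filter (fun u => Relation.ReflTransGen S y' u) with hA
    have hAsub : A ⊆ G.C := Finset.filter_subset _ _
    have hy'A : y' ∈ A := Finset.mem_filter.mpr ⟨hy'C, Relation.ReflTransGen.refl⟩
    have hyA : y ∉ A := fun hmem => hny (Finset.mem_filter.mp hmem).2
    -- forward closure of A
    have hclosed : ∀ u ∈ A, ∀ v, 0 < Λ.rate (u, v) c → v ∈ A := by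
      intro u hu v hv
      have huvR : (u, v) ∈ G.R := by
        by_contra hn
        rw [Λ.zero_off _ hn c] at hv
        exact lt_irrefl _ hv
      exact Finset.mem_filter.mpr ⟨htgtC u v huvR,
        ((Finset.mem_filter.mp hu).2).tail ⟨huvR, hv⟩⟩
    -- complex balance summed over A
    have hsum : ∑ u ∈ A, ∑ v ∈ G.C, Λ.rate (u, v) c
        = ∑ u ∈ A, ∑ v ∈ G.C, Λ.rate (v, u) c :=
      Finset.sum_congr rfl fun u hu => h u (hAsub hu)
    -- outgoing sums stay inside A
    have hout : ∀ u ∈ A, ∑ v ∈ G.C, Λ.rate (u, v) c = ∑ v ∈ A, Λ.rate (u, v) c := by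
      intro u hu
      refine (Finset.sum_subset hAsub ?_).symm
      intro v hvC hvA
      by_contra hne
      have : 0 < Λ.rate (u, v) c := lt_of_le_of_ne (Λ.nonneg _ c) (Ne.symm hne)
      exact hvA (hclosed u hu v this)
    -- split incoming sums
    have hin : ∀ u ∈ A, ∑ v ∈ G.C, Λ.rate (v, u) c
        = ∑ v ∈ G.C \ A, Λ.rate (v, u) c + ∑ v ∈ A, Λ.rate (v, u) c := by
      intro u _
      exact (Finset.sum_sdiff hAsub).symm
    have h1 : ∑ u ∈ A, ∑ v ∈ A, Λ.rate (u, v) c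
        = ∑ u ∈ A, (∑ v ∈ G.C \ A, Λ.rate (v, u) c + ∑ v ∈ A, Λ.rate (v, u) c) := by
      rw [← Finset.sum_congr rfl hout, hsum]
      exact Finset.sum_congr rfl hin
    rw [Finset.sum_add_distrib] at h1
    have h2 : ∑ u ∈ A, ∑ v ∈ A, Λ.rate (u, v) c = ∑ u ∈ A, ∑ v ∈ A, Λ.rate (v, u) c :=
      Finset.sum_comm
    have hzero : ∑ u ∈ A, ∑ v ∈ G.C \ A, Λ.rate (v, u) c = 0 := by linarith
    -- but the boundary flow includes the positive rate of r
    have hterm : ∑ v ∈ G.C \ A, Λ.rate (v, y') c = 0 :=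
      (Finset.sum_eq_zero_iff_of_nonneg (fun u _ =>
        Finset.sum_nonneg fun v _ => Λ.nonneg _ c)).mp hzero y' hy'A
    have hymem : y ∈ G.C \ A := Finset.mem_sdiff.mpr ⟨hyC, hyA⟩
    have : Λ.rate (y, y') c = 0 :=
      (Finset.sum_eq_zero_iff_of_nonneg (fun v _ => Λ.nonneg _ c)).mp hterm y hymem
    rw [hy, hy'] at this
    simp only [Prod.mk.eta] at this
    exact lt_irrefl _ (this ▸ hrpos)
  -- build the cycle from the path y' ⟶ y together with the reaction y ⟶ y'
  obtain ⟨m, p, hp0, hpm, hps⟩ := exists_path hreach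
  refine ⟨m + 2, fun i => if i = 0 then y else p (i - 1), by omega, ?_, ?_, ?_⟩
  · simp only [Nat.add_sub_cancel]
    have : m + 1 ≠ 0 := by omega
    simp [this, hpm]
  · intro i hi
    have hi' : i < m + 1 := by omega
    rcases Nat.eq_zero_or_pos i with h0 | hpos
    · subst h0
      simpa [hp0] using hr
    · have hi0 : i ≠ 0 := Nat.pos_iff_ne_zero.mp hpos
      have hi1 : i + 1 ≠ 0 := by omega
      have hstep := hps (i - 1) (by omega)
      have heq : i - 1 + 1 = i := by omega
      rw [heq] at hstep
      simp only [hi0, hi1, if_neg, if_false, Nat.add_sub_cancel]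
      exact Finset.mem_filter.mpr ⟨hstep.1, hstep.2⟩
  · refine ⟨0, by omega, ?_⟩
    simp [hp0, hy, hy']
end
end

section
/- Let (G, Λ) be a deterministic reaction system on n species and let c ∈ ℝ^n. If c is both a complex balanced state and a cycle balanced state of (G, Λ), then c is a reaction balanced state of (G, Λ). -/
open scoped ENNReal NNReal BigOperators Classical

noncomputable section

open CRN

/-- If there is an "active net edge" at `c` (some reaction strictly dominating its
reverse), then `c` cannot be both complex and cycle balanced. -/
lemma CRN.no_edge_aux {n : ℕ} {G : Network n}
    (Λ : DetKin G) (c : Fin n → ℝ)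
    (hcb : Det.ComplexBalanced Λ c) (hcyc : Det.CycleBalanced Λ c)
    (u v : Cplx n) (huv : Λ.rate (v, u) c < Λ.rate (u, v) c) : False := by
  classical
  -- membership in C from an active edge
  have hmemC : ∀ a b : Cplx n, Λ.rate (b, a) c < Λ.rate (a, b) c →
      a ∈ G.C ∧ b ∈ G.C := by
    intro a b hab
    have hpos : 0 < Λ.rate (a, b) c := lt_of_le_of_lt (Λ.nonneg _ _) hab
    have hR : (a, b) ∈ G.R := by
      by_contra h
      rw [Λ.zero_off _ h] at hpos
      exact lt_irrefl _ hpos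
    exact ⟨Finset.mem_union_left _ (Finset.mem_image.mpr ⟨(a, b), hR, rfl⟩),
      Finset.mem_union_right _ (Finset.mem_image.mpr ⟨(a, b), hR, rfl⟩)⟩
  -- every vertex with an incoming active edge has an outgoing one
  have hsucc : ∀ a : Cplx n, (∃ w, Λ.rate (a, w) c < Λ.rate (w, a) c) →
      ∃ b, Λ.rate (b, a) c < Λ.rate (a, b) c := by
    intro a ⟨w, hw⟩
    by_contra h
    push_neg at h
    have ha : a ∈ G.C := (hmemC w a hw).2
    have hwC : w ∈ G.C := (hmemC w a hw).1
    have hlt : ∑ y' ∈ G.C, Λ.rate (a, y') c < ∑ y' ∈ G.C, Λ.rate (y', a) c :=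
      Finset.sum_lt_sum (fun i _ => h i) ⟨w, hwC, hw⟩
    exact absurd (hcb a ha) (ne_of_lt hlt)
  -- the infinite walk along active net edges
  let X : ℕ → {p : Reaction n // Λ.rate (p.2, p.1) c < Λ.rate (p.1, p.2) c} := fun k =>
    Nat.rec ⟨(u, v), huv⟩
      (fun _ p => ⟨(p.1.2, Classical.choose (hsucc p.1.2 ⟨p.1.1, p.2⟩)),
        Classical.choose_spec (hsucc p.1.2 ⟨p.1.1, p.2⟩)⟩) k
  let x : ℕ → Cplx n := fun k => (X k).1.2
  have hstep : ∀ k, Λ.rate (x (k + 1), x k) c < Λ.rate (x k, x (k + 1)) c :=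
    fun k => (X (k + 1)).2
  have hxC : ∀ k, x k ∈ G.C := fun k => (hmemC _ _ (hstep k)).1
  -- pigeonhole: the walk revisits a vertex
  have hrep : ∃ l, ∃ m, m < l ∧ x m = x l := by
    obtain ⟨a, _, b, _, hab, heq⟩ :=
      Finset.exists_ne_map_eq_of_card_lt_of_maps_to
        (s := Finset.range (G.C.card + 1)) (t := G.C)
        (by simp) (fun a _ => hxC a)
    rcases hab.lt_or_gt with h | h
    · exact ⟨b, a, h, heq⟩
    · exact ⟨a, b, h, heq.symm⟩
  obtain ⟨m, hml, hxml⟩ := Nat.find_spec hrep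
  have hxinj : ∀ a b, a < b → b < Nat.find hrep → x a ≠ x b := by
    intro a b hab hb heq
    exact absurd (Nat.find_le ⟨a, hab, heq⟩) (not_le.mpr hb)
  set l0 := Nat.find hrep with hl0
  set j0 := l0 - m with hj0
  have hmj : m + j0 = l0 := by omega
  have hj1 : j0 ≠ 1 := by
    intro h
    have h1 : l0 = m + 1 := by omega
    have hs := hstep m
    rw [h1] at hxml
    rw [← hxml] at hs
    exact lt_irrefl _ hs
  have hj2 : j0 ≠ 2 := by
    intro h
    have h1 : l0 = m + 2 := by omega
    have e1 := hstep m
    have e2 : Λ.rate (x (m + 2), x (m + 1)) c < Λ.rate (x (m + 1), x (m + 2)) c :=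
      hstep (m + 1)
    rw [h1] at hxml
    rw [← hxml] at e2
    exact lt_irrefl _ (lt_trans e1 e2)
  have hj3 : 3 ≤ j0 := by omega
  let ys : ℕ → Cplx n := fun i => x (m + i)
  have hmem : ∀ i < j0, ys i ∈ G.C := fun i _ => hxC (m + i)
  have hinj : ∀ i < j0, ∀ k < j0, ys i = ys k → i = k := by
    intro i hi k hk heq
    by_contra hne2
    rcases Nat.lt_or_ge i k with h | h
    · exact hxinj (m + i) (m + k) (by omega) (by omega) heq
    · exact hxinj (m + k) (m + i) (by omega) (by omega) heq.symm
  have hcycle_edge : ∀ i < j0,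
      Λ.rate (ys ((i + 1) % j0), ys i) c < Λ.rate (ys i, ys ((i + 1) % j0)) c := by
    intro i hi
    rcases Nat.lt_or_ge (i + 1) j0 with h | h
    · rw [Nat.mod_eq_of_lt h]
      exact hstep (m + i)
    · have hieq : i + 1 = j0 := by omega
      have hmod : (i + 1) % j0 = 0 := by rw [hieq, Nat.mod_self]
      rw [hmod]
      have he := hstep (m + i)
      have harith : m + i + 1 = l0 := by omega
      rw [harith, ← hxml] at he
      exact he
  have hprod := hcyc j0 hj3 ys hmem hinj
  have hlt : ∏ i ∈ Finset.range j0, Λ.rate (ys ((i + 1) % j0), ys i) c <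
      ∏ i ∈ Finset.range j0, Λ.rate (ys i, ys ((i + 1) % j0)) c := by
    by_cases hz : ∃ i ∈ Finset.range j0, Λ.rate (ys ((i + 1) % j0), ys i) c = 0
    · obtain ⟨i0, hi0, h0⟩ := hz
      rw [Finset.prod_eq_zero hi0 h0]
      exact Finset.prod_pos fun i hi =>
        lt_of_le_of_lt (Λ.nonneg _ _) (hcycle_edge i (Finset.mem_range.mp hi))
    · push_neg at hz
      refine Finset.prod_lt_prod_of_nonempty ?_ ?_ ?_
      · intro i hi
        exact lt_of_le_of_ne (Λ.nonneg _ _) (Ne.symm (hz i hi))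
      · intro i hi
        exact hcycle_edge i (Finset.mem_range.mp hi)
      · exact ⟨0, Finset.mem_range.mpr (by omega)⟩
  exact absurd hprod (ne_of_gt hlt)

/-- A state that is both complex balanced and cycle balanced
is reaction balanced. -/
theorem complex_and_cycle_balanced_implies_reaction_balanced {n : ℕ} {G : Network n}
    (Λ : DetKin G) (c : Fin n → ℝ)
    (hcb : Det.ComplexBalanced Λ c) (hcyc : Det.CycleBalanced Λ c) :
    Det.ReactionBalanced Λ c := by
  intro y _ y' _
  by_contra hne
  rcases lt_or_gt_of_ne hne with h | h
  · exact CRN.no_edge_aux Λ c hcb hcyc y' y h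
  · exact CRN.no_edge_aux Λ c hcb hcyc y y' h
end
end

section
/- Let (G, K_D) be a deterministic mass action system on n species. If some positive state c ∈ ℝ^n_{>0} is a cycle balanced state of (G, K_D), then every state z ∈ ℝ^n is a cycle balanced state of (G, K_D); in particular, for every sequence of distinct complexes (y_1, …, y_j) ⊆ C with j ≥ 3 (setting y_{j+1} := y_1, and setting κ_{y→y'} := 0 if y → y' ∉ R), one has ∏_{i=1}^j κ_{y_i→y_{i+1}} = ∏_{i=1}^j κ_{y_{i+1}→y_i}. -/
open scoped ENNReal NNReal BigOperators Classical

noncomputable section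

open CRN

/-!
Under mass action the rate of `y → y'` at `z` is `κ_{y→y'}` times a factor depending on the
source `y` alone. Around a cycle `y_1 → ⋯ → y_j → y_1` every complex is the source of exactly one
forward and one backward reaction, so both cyclic products of rates equal the corresponding
cyclic product of rate constants times the same factor `∏ᵢ 1_{z ≥ 0} z^{y_i}`. This factor does
not vanish at a positive state, so cycle balance there is equivalent to the cycle condition on
the rate constants, which in turn gives cycle balance at every state.
-/

open Finset

lemma Finset.prod_range_succ_mod {M : Type*} [CommMonoid M] (f : ℕ → M) (j : ℕ) :
    ∏ i ∈ range j, f ((i + 1) % j) = ∏ i ∈ range j, f i := by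
  cases j with
  | zero => rfl
  | succ m =>
    have hshift : ∀ i ∈ range m, f ((i + 1) % (m + 1)) = f (i + 1) := fun i hi => by
      rw [Nat.mod_eq_of_lt (Nat.succ_lt_succ (mem_range.mp hi))]
    rw [prod_range_succ, Nat.mod_self, prod_congr rfl hshift, prod_range_succ']

namespace CRN

variable {n : ℕ}

def nonnegMonomial (z : Fin n → ℝ) (y : Cplx n) : ℝ :=
  (if ∀ i, 0 ≤ z i then 1 else 0) * ∏ i, z i ^ y i

lemma nonnegMonomial_pos {z : Fin n → ℝ} (hz : ∀ i, 0 < z i) (y : Cplx n) :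
    0 < nonnegMonomial z y := by
  rw [nonnegMonomial, if_pos fun i => (hz i).le, one_mul]
  exact prod_pos fun i _ => pow_pos (hz i) _

namespace MASystem

variable (S : MASystem n) (z : Fin n → ℝ) (ys : ℕ → Cplx n) (j : ℕ)

lemma detKin_rate_eq (r : Reaction n) :
    S.detKin.rate r z = S.κ r * nonnegMonomial z r.1 := by
  simp only [detKin, nonnegMonomial]
  ring

lemma prod_detKin_rate_cycle :
    ∏ i ∈ range j, S.detKin.rate (ys i, ys ((i + 1) % j)) z =
      (∏ i ∈ range j, S.κ (ys i, ys ((i + 1) % j))) *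
        ∏ i ∈ range j, nonnegMonomial z (ys i) := by
  simp only [detKin_rate_eq, prod_mul_distrib]

lemma prod_detKin_rate_cycle_rev :
    ∏ i ∈ range j, S.detKin.rate (ys ((i + 1) % j), ys i) z =
      (∏ i ∈ range j, S.κ (ys ((i + 1) % j), ys i)) *
        ∏ i ∈ range j, nonnegMonomial z (ys i) := by
  simp only [detKin_rate_eq, prod_mul_distrib]
  rw [prod_range_succ_mod (fun i => nonnegMonomial z (ys i))]

lemma prod_detKin_rate_cycle_eq_of_prod_κ_eq
    (hκ : ∏ i ∈ range j, S.κ (ys i, ys ((i + 1) % j)) =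
      ∏ i ∈ range j, S.κ (ys ((i + 1) % j), ys i)) :
    ∏ i ∈ range j, S.detKin.rate (ys i, ys ((i + 1) % j)) z =
      ∏ i ∈ range j, S.detKin.rate (ys ((i + 1) % j), ys i) z := by
  rw [prod_detKin_rate_cycle, prod_detKin_rate_cycle_rev, hκ]

lemma prod_κ_cycle_eq_of_prod_detKin_rate_eq {z : Fin n → ℝ} (hz : ∀ i, 0 < z i)
    (hrate : ∏ i ∈ range j, S.detKin.rate (ys i, ys ((i + 1) % j)) z =
      ∏ i ∈ range j, S.detKin.rate (ys ((i + 1) % j), ys i) z) :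
    ∏ i ∈ range j, S.κ (ys i, ys ((i + 1) % j)) =
      ∏ i ∈ range j, S.κ (ys ((i + 1) % j), ys i) := by
  rw [prod_detKin_rate_cycle, prod_detKin_rate_cycle_rev] at hrate
  exact mul_right_cancel₀ (prod_pos fun i _ => nonnegMonomial_pos hz (ys i)).ne' hrate

end MASystem

end CRN

/-- For a deterministic mass action system, a positive cycle balanced
state forces every state to be cycle balanced; in particular the rate constants satisfy
the cycle conditions. -/
theorem mass_action_cycle_balanced_everywhere {n : ℕ} (S : MASystem n)
    (c : Fin n → ℝ) (hc : ∀ i, 0 < c i) (h : Det.CycleBalanced S.detKin c) :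
    (∀ z : Fin n → ℝ, Det.CycleBalanced S.detKin z) ∧
    (∀ j : ℕ, 3 ≤ j → ∀ ys : ℕ → Cplx n,
      (∀ i < j, ys i ∈ S.G.C) →
      (∀ i < j, ∀ k < j, ys i = ys k → i = k) →
      ∏ i ∈ Finset.range j, S.κ (ys i, ys ((i + 1) % j)) =
      ∏ i ∈ Finset.range j, S.κ (ys ((i + 1) % j), ys i)) := by
  have hκ : ∀ j : ℕ, 3 ≤ j → ∀ ys : ℕ → Cplx n,
      (∀ i < j, ys i ∈ S.G.C) → (∀ i < j, ∀ k < j, ys i = ys k → i = k) →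
      ∏ i ∈ Finset.range j, S.κ (ys i, ys ((i + 1) % j)) =
      ∏ i ∈ Finset.range j, S.κ (ys ((i + 1) % j), ys i) :=
    fun j hj ys hmem hinj =>
      S.prod_κ_cycle_eq_of_prod_detKin_rate_eq ys j hc (h j hj ys hmem hinj)
  exact ⟨fun z j hj ys hmem hinj =>
    S.prod_detKin_rate_cycle_eq_of_prod_κ_eq z ys j (hκ j hj ys hmem hinj), hκ⟩
end
end

section
/- Let (G, K_D) be a deterministic mass action system on n species. If (G, K_D) has a positive complex balanced state c ∈ ℝ^n_{>0}, then within every positive stoichiometric compatibility class of (G, K_D) there exists exactly one positive equilibrium, and every equilibrium of (G, K_D) is a complex balanced state. -/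
open scoped ENNReal NNReal BigOperators Classical

noncomputable section

open CRN

/-!
Mass action rates at `z ≥ 0` are the rates at `c` times `(z / c) ^ y`, and complex balance of `c`
says that the rates at `c` form a circulation on the reaction graph. At an equilibrium `z ≥ 0`,
the complexes supported in the support of `z` are closed under firing reactions, hence, by the
circulation, under reversed ones. On the reactions that fire, pairing the equilibrium equation
with `μ = log (z / c)` and telescoping gives `∑ κ c^y e^{μ·y} (e^{μ·(y'-y)} - 1 - μ·(y'-y)) = 0`,
so `μ·y = μ·y'`. Thus `(z / c) ^ y = (z / c) ^ y'` along every reaction, the rates at `z` are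
those at `c` times a factor constant along reactions, and still form a circulation.

In a positive class, a minimizer of the relative entropy `∑ cᵢ klFun (xᵢ / cᵢ)` is positive, as
the gradient `log (x / c)` blows up at the boundary, so it is critical along the stoichiometric
subspace `S`: `μ ⊥ S`, which makes it complex balanced. Two positive equilibria `z₁, z₂` in a
class both have `log (zₖ / c) ⊥ S ∋ z₁ - z₂`, so `∑ (log z₁ᵢ - log z₂ᵢ) (z₁ᵢ - z₂ᵢ) = 0`, which
forces `z₁ = z₂`.
-/

namespace CRN

open Real InformationTheory Filter Topology

section Circulation

variable {α : Type*} [DecidableEq α] {M : Type*} [AddCommGroup M] [Module ℝ M]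

def IsCirculation (R : Finset (α × α)) (K : α × α → ℝ) : Prop :=
  ∀ y, ∑ r ∈ R with r.1 = y, K r = ∑ r ∈ R with r.2 = y, K r

variable {R : Finset (α × α)} {K : α × α → ℝ}

theorem IsCirculation.sum_smul_fst_eq (hK : IsCirculation R K) (F : α → M) :
    ∑ r ∈ R, K r • F r.1 = ∑ r ∈ R, K r • F r.2 := by
  let V := R.image Prod.fst ∪ R.image Prod.snd
  rw [← Finset.sum_fiberwise_of_maps_to (t := V) (g := Prod.fst)
      fun r hr => Finset.mem_union_left _ (Finset.mem_image_of_mem _ hr),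
    ← Finset.sum_fiberwise_of_maps_to (t := V) (g := Prod.snd)
      fun r hr => Finset.mem_union_right _ (Finset.mem_image_of_mem _ hr)]
  refine Finset.sum_congr rfl fun y _ => ?_
  calc ∑ r ∈ R with r.1 = y, K r • F r.1 = (∑ r ∈ R with r.1 = y, K r) • F y := by
        rw [Finset.sum_smul]
        exact Finset.sum_congr rfl fun r hr => by rw [(Finset.mem_filter.mp hr).2]
    _ = (∑ r ∈ R with r.2 = y, K r) • F y := by rw [hK y]
    _ = ∑ r ∈ R with r.2 = y, K r • F r.2 := by
        rw [Finset.sum_smul]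
        exact Finset.sum_congr rfl fun r hr => by rw [(Finset.mem_filter.mp hr).2]

theorem IsCirculation.sum_smul_sub_eq_zero (hK : IsCirculation R K) (F : α → M) :
    ∑ r ∈ R, K r • (F r.2 - F r.1) = 0 := by
  simp only [smul_sub, Finset.sum_sub_distrib, hK.sum_smul_fst_eq F, sub_self]

theorem IsCirculation.mul_fst (hK : IsCirculation R K) {u : α → ℝ}
    (hu : ∀ r ∈ R, u r.1 = u r.2) : IsCirculation R fun r => K r * u r.1 := by
  intro y
  calc ∑ r ∈ R with r.1 = y, K r * u r.1 = (∑ r ∈ R with r.1 = y, K r) * u y := by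
        rw [Finset.sum_mul]
        exact Finset.sum_congr rfl fun r hr => by rw [(Finset.mem_filter.mp hr).2]
    _ = (∑ r ∈ R with r.2 = y, K r) * u y := by rw [hK y]
    _ = ∑ r ∈ R with r.2 = y, K r * u r.1 := by
        rw [Finset.sum_mul]
        refine Finset.sum_congr rfl fun r hr => ?_
        obtain ⟨hrR, hry⟩ := Finset.mem_filter.mp hr
        rw [hu r hrR, hry]

theorem IsCirculation.filter_fst (hK : IsCirculation R K) {p : α → Prop} [DecidablePred p]
    (hp : ∀ r ∈ R, p r.1 ↔ p r.2) : IsCirculation (R.filter fun r => p r.1) K := by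
  intro y
  simp only [Finset.filter_filter]
  by_cases hy : p y
  · have e1 : (R.filter fun r => p r.1 ∧ r.1 = y) = R.filter fun r => r.1 = y :=
      Finset.filter_congr fun r _ => ⟨And.right, fun h => ⟨h ▸ hy, h⟩⟩
    have e2 : (R.filter fun r => p r.1 ∧ r.2 = y) = R.filter fun r => r.2 = y :=
      Finset.filter_congr fun r hr => ⟨And.right, fun h => ⟨(hp r hr).mpr (h ▸ hy), h⟩⟩
    rw [e1, e2]
    exact hK y
  · rw [Finset.sum_eq_zero, Finset.sum_eq_zero]
    · intro r hr
      obtain ⟨hrR, h1, h2⟩ := Finset.mem_filter.mp hr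
      exact absurd (h2 ▸ (hp r hrR).mp h1) hy
    · intro r hr
      obtain ⟨-, h1, h2⟩ := Finset.mem_filter.mp hr
      exact absurd (h2 ▸ h1) hy

theorem IsCirculation.forall_iff_of_forall_imp (hK : IsCirculation R K)
    (hpos : ∀ r ∈ R, 0 < K r) {p : α → Prop} (hp : ∀ r ∈ R, p r.1 → p r.2) :
    ∀ r ∈ R, p r.1 ↔ p r.2 := by
  -- telescoping the indicator of `p`: edges starting in `p` weigh as much as edges ending in `p`
  let F : α → ℝ := fun y => if p y then 1 else 0
  have hle : ∀ r ∈ R, K r • F r.1 ≤ K r • F r.2 := fun r hr => by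
    have : F r.1 ≤ F r.2 := by by_cases h : p r.1 <;> simp [F, h, hp r hr, apply_ite]
    exact smul_le_smul_of_nonneg_left this (hpos r hr).le
  have heq := (Finset.sum_eq_sum_iff_of_le hle).mp (hK.sum_smul_fst_eq F)
  intro r hr
  refine ⟨hp r hr, fun h2 => by_contra fun h1 => ?_⟩
  exact (hpos r hr).ne (by simpa [F, h1, h2] using heq r hr)

theorem IsCirculation.forall_eq_of_sum_mul_exp_mul_sub_eq_zero (hK : IsCirculation R K)
    (hpos : ∀ r ∈ R, 0 < K r) {a : α → ℝ}
    (h : ∑ r ∈ R, K r * exp (a r.1) * (a r.2 - a r.1) = 0) : ∀ r ∈ R, a r.1 = a r.2 := by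
  -- `exp d ≥ 1 + d`, with equality only at `d = 0`, applied to `d = a r.2 - a r.1`
  let g := fun r : α × α => K r * exp (a r.1) * (exp (a r.2 - a r.1) - 1 - (a r.2 - a r.1))
  have hg_nonneg : ∀ r ∈ R, 0 ≤ g r := fun r hr =>
    mul_nonneg (mul_pos (hpos r hr) (exp_pos _)).le
      (by linarith [add_one_le_exp (a r.2 - a r.1)])
  have hg_sum : ∑ r ∈ R, g r = 0 := by
    have hexp := hK.sum_smul_fst_eq fun y => exp (a y)
    simp only [smul_eq_mul] at hexp
    calc ∑ r ∈ R, g r = ∑ r ∈ R, K r * exp (a r.2) - ∑ r ∈ R, K r * exp (a r.1)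
          - ∑ r ∈ R, K r * exp (a r.1) * (a r.2 - a r.1) := by
          rw [← Finset.sum_sub_distrib, ← Finset.sum_sub_distrib]
          refine Finset.sum_congr rfl fun r _ => ?_
          simp only [g, exp_sub]
          field_simp
      _ = 0 := by rw [h, hexp]; ring
  intro r hr
  by_contra hne
  have hlt := add_one_lt_exp (sub_ne_zero.mpr (Ne.symm hne))
  have : 0 < g r := mul_pos (mul_pos (hpos r hr) (exp_pos _)) (by linarith)
  exact this.ne' ((Finset.sum_eq_zero_iff_of_nonneg hg_nonneg).mp hg_sum r hr)

end Circulation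

variable {n : ℕ}

namespace DetKin

variable {G : Network n} (Λ : DetKin G)

theorem sum_rate_fst (y : Cplx n) (z : Fin n → ℝ) :
    ∑ y' ∈ G.C, Λ.rate (y, y') z = ∑ r ∈ G.R with r.1 = y, Λ.rate r z := by
  refine (Finset.sum_bij_ne_zero (fun r _ _ => r.2) (fun r hr _ => ?_)
    (fun r₁ h₁ _ r₂ h₂ _ h => ?_) (fun y' _ hy' => ?_) (fun r hr _ => ?_)).symm
  · exact Finset.mem_union_right _ (Finset.mem_image_of_mem _ (Finset.mem_filter.mp hr).1)
  · exact Prod.ext ((Finset.mem_filter.mp h₁).2.trans (Finset.mem_filter.mp h₂).2.symm) h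
  · exact ⟨(y, y'), Finset.mem_filter.mpr ⟨not_not.mp fun h => hy' (Λ.zero_off _ h z), rfl⟩,
      hy', rfl⟩
  · rw [← (Finset.mem_filter.mp hr).2]

theorem sum_rate_snd (y : Cplx n) (z : Fin n → ℝ) :
    ∑ y' ∈ G.C, Λ.rate (y', y) z = ∑ r ∈ G.R with r.2 = y, Λ.rate r z := by
  refine (Finset.sum_bij_ne_zero (fun r _ _ => r.1) (fun r hr _ => ?_)
    (fun r₁ h₁ _ r₂ h₂ _ h => ?_) (fun y' _ hy' => ?_) (fun r hr _ => ?_)).symm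
  · exact Finset.mem_union_left _ (Finset.mem_image_of_mem _ (Finset.mem_filter.mp hr).1)
  · exact Prod.ext h ((Finset.mem_filter.mp h₁).2.trans (Finset.mem_filter.mp h₂).2.symm)
  · exact ⟨(y', y), Finset.mem_filter.mpr ⟨not_not.mp fun h => hy' (Λ.zero_off _ h z), rfl⟩,
      hy', rfl⟩
  · rw [← (Finset.mem_filter.mp hr).2]

end DetKin

namespace Det

variable {G : Network n}

theorem complexBalanced_iff_isCirculation (Λ : DetKin G) (z : Fin n → ℝ) :
    ComplexBalanced Λ z ↔ IsCirculation G.R fun r => Λ.rate r z := by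
  refine ⟨fun h y => ?_, fun h y _ => by rw [Λ.sum_rate_fst, Λ.sum_rate_snd]; exact h y⟩
  by_cases hy : y ∈ G.C
  · rw [← Λ.sum_rate_fst, ← Λ.sum_rate_snd]
    exact h y hy
  · have hR : ∀ r ∈ G.R, r.1 ≠ y ∧ r.2 ≠ y := fun r hr =>
      ⟨fun h => hy (h ▸ Finset.mem_union_left _ (Finset.mem_image_of_mem _ hr)),
        fun h => hy (h ▸ Finset.mem_union_right _ (Finset.mem_image_of_mem _ hr))⟩
    rw [Finset.filter_false_of_mem fun r hr => (hR r hr).1,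
      Finset.filter_false_of_mem fun r hr => (hR r hr).2]

theorem ComplexBalanced.isEquilibrium {Λ : DetKin G} {z : Fin n → ℝ}
    (h : ComplexBalanced Λ z) : IsEquilibrium Λ z :=
  ((complexBalanced_iff_isCirculation Λ z).mp h).sum_smul_sub_eq_zero toR

theorem IsEquilibrium.snd_eq_zero {Λ : DetKin G} {z : Fin n → ℝ} (heq : IsEquilibrium Λ z)
    (hfire : ∀ r ∈ G.R, Λ.rate r z ≠ 0 → ∀ i, z i = 0 → r.1 i = 0)
    {r : Reaction n} (hr : r ∈ G.R) (hrz : Λ.rate r z ≠ 0) {i : Fin n} (hi : z i = 0) :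
    r.2 i = 0 := by
  have hsum : ∑ s ∈ G.R, Λ.rate s z * ((s.2 i : ℝ) - s.1 i) = 0 := by
    simpa [toR] using congrFun heq i
  -- every term is a nonnegative inflow of the absent species `i`
  have hterm : ∀ s ∈ G.R, Λ.rate s z * ((s.2 i : ℝ) - s.1 i) = Λ.rate s z * s.2 i := by
    intro s hs
    by_cases hsz : Λ.rate s z = 0
    · simp [hsz]
    · simp [hfire s hs hsz i hi]
  rw [Finset.sum_congr rfl hterm,
    Finset.sum_eq_zero_iff_of_nonneg fun s _ => mul_nonneg (Λ.nonneg s z) (Nat.cast_nonneg _)]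
    at hsum
  exact_mod_cast (mul_eq_zero.mp (hsum r hr)).resolve_left hrz

end Det

theorem dotProduct_eq_zero_of_mem_stoichSubspace {G : Network n} {μ : Fin n → ℝ}
    (hμ : ∀ r ∈ G.R, μ ⬝ᵥ (toR r.2 - toR r.1) = 0) {v : Fin n → ℝ}
    (hv : v ∈ stoichSubspace G) : μ ⬝ᵥ v = 0 := by
  induction hv using Submodule.span_induction with
  | mem x hx =>
    obtain ⟨r, hr, rfl⟩ := hx
    exact hμ r hr
  | zero => exact dotProduct_zero μ
  | add x y _ _ hx hy => rw [dotProduct_add, hx, hy, add_zero]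
  | smul a x _ hx => rw [dotProduct_smul, hx, smul_zero]

theorem isClosed_compatClass (G : Network n) (v : Fin n → ℝ) : IsClosed (compatClass G v) :=
  ((stoichSubspace G).closed_of_finiteDimensional.preimage (continuous_sub_right v)).inter
    (isClosed_le continuous_const continuous_id : IsClosed {x : Fin n → ℝ | 0 ≤ x})

theorem convex_compatClass (G : Network n) (v : Fin n → ℝ) : Convex ℝ (compatClass G v) := by
  intro x hx y hy a b ha hb hab
  refine ⟨?_, fun i => ?_⟩
  · have : a • x + b • y - v = a • (x - v) + b • (y - v) := by
      rw [smul_sub, smul_sub, ← add_sub_add_comm, ← add_smul, hab, one_smul]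
    rw [this]
    exact add_mem (Submodule.smul_mem _ a hx.1) (Submodule.smul_mem _ b hy.1)
  · simp only [Pi.add_apply, Pi.smul_apply, smul_eq_mul]
    exact add_nonneg (mul_nonneg ha (hx.2 i)) (mul_nonneg hb (hy.2 i))

theorem eq_of_sum_log_sub_log_mul_sub_eq_zero {ι : Type*} [Fintype ι] {x y : ι → ℝ}
    (hx : ∀ i, 0 < x i) (hy : ∀ i, 0 < y i)
    (h : ∑ i, (log (x i) - log (y i)) * (x i - y i) = 0) : x = y := by
  have hpos : ∀ i, x i ≠ y i → 0 < (log (x i) - log (y i)) * (x i - y i) := fun i hne => by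
    rcases hne.lt_or_gt with hlt | hlt
    · exact mul_pos_of_neg_of_neg (sub_neg.mpr (log_lt_log (hx i) hlt)) (sub_neg.mpr hlt)
    · exact mul_pos (sub_pos.mpr (log_lt_log (hy i) hlt)) (sub_pos.mpr hlt)
  have hnonneg : ∀ i ∈ Finset.univ, 0 ≤ (log (x i) - log (y i)) * (x i - y i) := fun i _ => by
    by_cases hi : x i = y i
    · simp [hi]
    · exact (hpos i hi).le
  funext i
  by_contra hi
  exact (hpos i hi).ne' ((Finset.sum_eq_zero_iff_of_nonneg hnonneg).mp h i (Finset.mem_univ i))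

theorem mul_klFun_div_sub_le {a x y : ℝ} (ha : 0 < a) (hx : 0 < x) (hy : 0 ≤ y) :
    a * klFun (x / a) - a * klFun (y / a) ≤ log (x / a) * (x - y) := by
  have hgibbs : y * (log (x / a) - log (y / a)) ≤ x - y := by
    rcases hy.eq_or_lt with rfl | hy
    · simpa using hx.le
    rw [← log_div (by positivity) (by positivity), div_div_div_cancel_right₀ ha.ne']
    calc y * log (x / y) ≤ y * (x / y - 1) := by
          gcongr
          exact log_le_sub_one_of_pos (by positivity)
      _ = x - y := by field_simp
  have hkl : ∀ t, a * klFun (t / a) = t * log (t / a) + a - t := fun t => by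
    rw [klFun]
    field_simp
  rw [hkl, hkl]
  linarith

theorem log_div_mul_sub_le {a y w t : ℝ} (ha : 0 < a) (hw : 0 < w) (ht : t ≤ 1)
    (hx : 0 < y + t * (w - y)) :
    log ((y + t * (w - y)) / a) * (w - y) ≤ log (w / a) * (w - y) := by
  rcases le_or_gt y w with hyw | hyw
  · refine mul_le_mul_of_nonneg_right (log_le_log (by positivity) ?_) (sub_nonneg.mpr hyw)
    gcongr
    nlinarith
  · refine mul_le_mul_of_nonpos_right (log_le_log (by positivity) ?_) (sub_nonpos.mpr hyw.le)
    gcongr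
    nlinarith

def ratioMonomial (c z : Fin n → ℝ) (y : Cplx n) : ℝ := ∏ i, (z i / c i) ^ y i

/-- Since `Real.log 0 = 0`, species absent from `z` get coordinate `0`. -/
def logRatio (c z : Fin n → ℝ) : Fin n → ℝ := fun i => log (z i / c i)

variable {c z : Fin n → ℝ}

theorem ratioMonomial_ne_zero_iff (hc : ∀ i, 0 < c i) {y : Cplx n} :
    ratioMonomial c z y ≠ 0 ↔ ∀ i, z i = 0 → y i = 0 := by
  simp [ratioMonomial, Finset.prod_ne_zero_iff, (hc _).ne', or_iff_not_imp_left]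

theorem ratioMonomial_eq_exp (hc : ∀ i, 0 < c i) (hz : ∀ i, 0 ≤ z i) {y : Cplx n}
    (hy : ratioMonomial c z y ≠ 0) : ratioMonomial c z y = exp (logRatio c z ⬝ᵥ toR y) := by
  rw [dotProduct, exp_sum, ratioMonomial]
  refine Finset.prod_congr rfl fun i _ => ?_
  rcases (hz i).eq_or_lt with hzi | hzi
  · simp [(ratioMonomial_ne_zero_iff hc).mp hy i hzi.symm, toR]
  · rw [logRatio, toR, mul_comm, exp_nat_mul, exp_log (div_pos hzi (hc i))]

theorem ratioMonomial_fst_eq_snd_iff (hc : ∀ i, 0 < c i) (hz : ∀ i, 0 < z i) (r : Reaction n) :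
    ratioMonomial c z r.1 = ratioMonomial c z r.2 ↔
      logRatio c z ⬝ᵥ (toR r.2 - toR r.1) = 0 := by
  have hne : ∀ y, ratioMonomial c z y ≠ 0 := fun y =>
    (ratioMonomial_ne_zero_iff hc).mpr fun i hi => absurd hi (hz i).ne'
  have hz' : ∀ i, 0 ≤ z i := fun i => (hz i).le
  rw [ratioMonomial_eq_exp hc hz' (hne _), ratioMonomial_eq_exp hc hz' (hne _), exp_eq_exp,
    dotProduct_sub, sub_eq_zero, eq_comm]

/-- The Horn–Jackson Lyapunov function. -/
def relEntropy (c x : Fin n → ℝ) : ℝ := ∑ i, c i * klFun (x i / c i)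

variable (c) in
theorem continuous_relEntropy : Continuous (relEntropy c) := by
  unfold relEntropy
  fun_prop

theorem relEntropy_sub_le (hc : ∀ i, 0 < c i) {x y : Fin n → ℝ} (hx : ∀ i, 0 < x i)
    (hy : ∀ i, 0 ≤ y i) : relEntropy c x - relEntropy c y ≤ logRatio c x ⬝ᵥ (x - y) := by
  rw [relEntropy, relEntropy, ← Finset.sum_sub_distrib]
  exact Finset.sum_le_sum fun i _ => mul_klFun_div_sub_le (hc i) (hx i) (hy i)

theorem hasDerivAt_relEntropy_add_smul (hc : ∀ i, 0 < c i) (hz : ∀ i, 0 < z i)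
    (s : Fin n → ℝ) :
    HasDerivAt (fun t : ℝ => relEntropy c (z + t • s)) (logRatio c z ⬝ᵥ s) 0 := by
  simp only [relEntropy, dotProduct, logRatio, Pi.add_apply, Pi.smul_apply, smul_eq_mul]
  refine HasDerivAt.fun_sum fun i _ => ?_
  have hline : HasDerivAt (fun t : ℝ => (z i + t * s i) / c i) (s i / c i) 0 := by
    simpa using (((hasDerivAt_id (0 : ℝ)).mul_const (s i)).const_add (z i)).div_const (c i)
  have hkl : HasDerivAt klFun (log (z i / c i)) ((z i + 0 * s i) / c i) := by
    simpa using hasDerivAt_klFun (div_pos (hz i) (hc i)).ne'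
  exact ((hkl.comp 0 hline).const_mul (c i)).congr_deriv
    (by rw [mul_left_comm, mul_div_cancel₀ _ (hc i).ne'])

theorem exists_isMinOn_relEntropy (hc : ∀ i, 0 < c i) {X : Set (Fin n → ℝ)} (hX : IsClosed X)
    (hnonneg : ∀ x ∈ X, ∀ i, 0 ≤ x i) (hne : X.Nonempty) :
    ∃ z ∈ X, IsMinOn (relEntropy c) X z := by
  obtain ⟨w, hw⟩ := hne
  have hbound : ∀ j, ∃ T, ∀ t, klFun t ≤ relEntropy c w / c j → t ≤ T := fun j => by
    obtain ⟨T, hT⟩ :=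
      (tendsto_klFun_atTop.eventually_gt_atTop (relEntropy c w / c j)).exists_forall_of_atTop
    exact ⟨T, fun t ht => not_lt.mp fun hlt => (hT t hlt.le).not_ge ht⟩
  choose T hT using hbound
  let L := X ∩ {x | relEntropy c x ≤ relEntropy c w}
  have hL : IsCompact L := by
    refine isCompact_Icc.of_isClosed_subset
      (hX.inter (isClosed_le (continuous_relEntropy c) continuous_const))
      (fun x hx => ⟨hnonneg x hx.1, fun j => ?_⟩ : L ⊆ Set.Icc 0 fun j => c j * T j)
    have hterm : c j * klFun (x j / c j) ≤ relEntropy c w :=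
      (Finset.single_le_sum (fun i _ => mul_nonneg (hc i).le
        (klFun_nonneg (div_nonneg (hnonneg x hx.1 i) (hc i).le))) (Finset.mem_univ j)).trans hx.2
    have := hT j _ ((le_div_iff₀' (hc j)).mpr hterm)
    rwa [div_le_iff₀' (hc j)] at this
  obtain ⟨z, hzL, hmin⟩ :=
    hL.exists_isMinOn ⟨w, hw, le_refl (relEntropy c w)⟩ (continuous_relEntropy c).continuousOn
  refine ⟨z, hzL.1, fun x hx => ?_⟩
  by_cases hxw : relEntropy c x ≤ relEntropy c w
  · exact hmin ⟨hx, hxw⟩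
  · exact (hmin ⟨hw, le_refl (relEntropy c w)⟩).trans (le_of_not_ge hxw)

theorem pos_of_isMinOn_relEntropy (hc : ∀ i, 0 < c i) {X : Set (Fin n → ℝ)}
    (hX : Convex ℝ X) (hnonneg : ∀ x ∈ X, ∀ i, 0 ≤ x i) {w : Fin n → ℝ} (hz : z ∈ X)
    (hmin : IsMinOn (relEntropy c) X z) (hw : w ∈ X) (hwpos : ∀ i, 0 < w i) (j : Fin n) :
    0 < z j := by
  by_contra hzj
  have hzj : z j = 0 := le_antisymm (not_lt.mp hzj) (hnonneg z hz j)
  -- Moving from `z` towards `w` by `t` changes `relEntropy` by at most `t * (E + w j * log t)`,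
  -- since the `j`-th partial derivative `log (x j / c j)` tends to `-∞` as `x j → 0`.
  let E := ∑ i, log (w i / c i) * (w i - z i)
  let t := exp (-(|E| + 1) / w j)
  have ht0 : 0 < t := exp_pos _
  have ht1 : t ≤ 1 := exp_le_one_iff.mpr
    (div_nonpos_of_nonpos_of_nonneg (by linarith [abs_nonneg E]) (hwpos j).le)
  let x := z + t • (w - z)
  have hxpos : ∀ i, 0 < x i := fun i => by
    show 0 < z i + t * (w i - z i)
    nlinarith [hnonneg z hz i, hwpos i]
  have hterm : ∀ i, log (x i / c i) * (w i - z i) ≤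
      log (w i / c i) * (w i - z i) + if i = j then w j * log t else 0 := fun i => by
    split_ifs with hij
    · subst hij
      show log ((z i + t * (w i - z i)) / c i) * (w i - z i) ≤ _
      rw [hzj, zero_add, sub_zero, mul_div_assoc, log_mul ht0.ne' (div_pos (hwpos i) (hc i)).ne']
      linarith
    · exact (log_div_mul_sub_le (hc i) (hwpos i) ht1 (hxpos i)).trans_eq (add_zero _).symm
  have hslope : logRatio c x ⬝ᵥ (w - z) ≤ E + w j * log t := by
    refine (Finset.sum_le_sum fun i _ => hterm i).trans_eq ?_
    rw [Finset.sum_add_distrib, Finset.sum_ite_eq' Finset.univ j, if_pos (Finset.mem_univ j)]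
  have hEt : E + w j * log t < 0 := by
    rw [log_exp, mul_div_cancel₀ _ (hwpos j).ne']
    linarith [le_abs_self E]
  have hdescent := relEntropy_sub_le hc hxpos (hnonneg z hz)
  rw [show x - z = t • (w - z) from add_sub_cancel_left z _, dotProduct_smul, smul_eq_mul]
    at hdescent
  linarith [isMinOn_iff.mp hmin x (hX.add_smul_sub_mem hz hw ⟨ht0.le, ht1⟩),
    mul_neg_of_pos_of_neg ht0 (hslope.trans_lt hEt)]

namespace MASystem

variable {S : MASystem n}

variable (S) in
theorem detKin_rate_of_nonneg (hz : ∀ i, 0 ≤ z i) (r : Reaction n) :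
    S.detKin.rate r z = S.κ r * ∏ i, z i ^ r.1 i := by
  simp [MASystem.detKin, hz]

variable (S) in
theorem detKin_rate_of_not_nonneg (hz : ¬ ∀ i, 0 ≤ z i) (r : Reaction n) :
    S.detKin.rate r z = 0 := by
  simp [MASystem.detKin, hz]

theorem detKin_rate_pos (hc : ∀ i, 0 < c i) {r : Reaction n} (hr : r ∈ S.G.R) :
    0 < S.detKin.rate r c := by
  rw [detKin_rate_of_nonneg S fun i => (hc i).le]
  exact mul_pos (S.pos r hr) (Finset.prod_pos fun i _ => pow_pos (hc i) _)

theorem detKin_rate_eq_mul_ratioMonomial (hc : ∀ i, 0 < c i) (hz : ∀ i, 0 ≤ z i)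
    (r : Reaction n) : S.detKin.rate r z = S.detKin.rate r c * ratioMonomial c z r.1 := by
  rw [detKin_rate_of_nonneg S hz, detKin_rate_of_nonneg S fun i => (hc i).le, ratioMonomial,
    mul_assoc, ← Finset.prod_mul_distrib]
  congr 1
  refine Finset.prod_congr rfl fun i _ => ?_
  rw [div_pow, mul_div_cancel₀ _ (pow_ne_zero _ (hc i).ne')]

theorem complexBalanced_of_ratioMonomial_eq (hc : ∀ i, 0 < c i)
    (hcb : Det.ComplexBalanced S.detKin c) (hz : ∀ i, 0 ≤ z i)
    (h : ∀ r ∈ S.G.R, ratioMonomial c z r.1 = ratioMonomial c z r.2) :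
    Det.ComplexBalanced S.detKin z := by
  rw [Det.complexBalanced_iff_isCirculation]
  simp_rw [detKin_rate_eq_mul_ratioMonomial hc hz]
  exact ((Det.complexBalanced_iff_isCirculation _ _).mp hcb).mul_fst h

theorem ratioMonomial_fst_ne_zero_iff_snd (hc : ∀ i, 0 < c i)
    (hcb : Det.ComplexBalanced S.detKin c) (hz : ∀ i, 0 ≤ z i)
    (heq : Det.IsEquilibrium S.detKin z) :
    ∀ r ∈ S.G.R, ratioMonomial c z r.1 ≠ 0 ↔ ratioMonomial c z r.2 ≠ 0 := by
  have hfire : ∀ r ∈ S.G.R, S.detKin.rate r z ≠ 0 ↔ ratioMonomial c z r.1 ≠ 0 :=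
    fun r hr => by
      rw [detKin_rate_eq_mul_ratioMonomial hc hz, mul_ne_zero_iff,
        and_iff_right (detKin_rate_pos hc hr).ne']
  refine ((Det.complexBalanced_iff_isCirculation _ _).mp hcb).forall_iff_of_forall_imp
    (p := fun y => ratioMonomial c z y ≠ 0) (fun r hr => detKin_rate_pos hc hr)
    fun r hr h1 => (ratioMonomial_ne_zero_iff hc).mpr ?_
  exact fun i hi => heq.snd_eq_zero
    (fun s hs hsz => (ratioMonomial_ne_zero_iff hc).mp ((hfire s hs).mp hsz)) hr
    ((hfire r hr).mpr h1) hi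

theorem ratioMonomial_fst_eq_snd_of_isEquilibrium (hc : ∀ i, 0 < c i)
    (hcb : Det.ComplexBalanced S.detKin c) (hz : ∀ i, 0 ≤ z i)
    (heq : Det.IsEquilibrium S.detKin z) :
    ∀ r ∈ S.G.R, ratioMonomial c z r.1 = ratioMonomial c z r.2 := by
  have hiff := ratioMonomial_fst_ne_zero_iff_snd hc hcb hz heq
  let active := S.G.R.filter fun r => ratioMonomial c z r.1 ≠ 0
  let a : Cplx n → ℝ := fun y => logRatio c z ⬝ᵥ toR y
  have hrate : ∀ r ∈ active, S.detKin.rate r z = S.detKin.rate r c * exp (a r.1) :=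
    fun r hr => by
      rw [detKin_rate_eq_mul_ratioMonomial hc hz,
        ratioMonomial_eq_exp hc hz (Finset.mem_filter.mp hr).2]
  have hpair : ∑ r ∈ active, S.detKin.rate r c * exp (a r.1) * (a r.2 - a r.1) = 0 := by
    calc ∑ r ∈ active, S.detKin.rate r c * exp (a r.1) * (a r.2 - a r.1)
        = ∑ r ∈ S.G.R, S.detKin.rate r z * (a r.2 - a r.1) := by
          refine Finset.sum_subset_zero_on_sdiff (Finset.filter_subset _ _) (fun r hr => ?_)
            fun r hr => by rw [hrate r hr]
          obtain ⟨hrR, hr⟩ := Finset.mem_sdiff.mp hr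
          rw [detKin_rate_eq_mul_ratioMonomial hc hz,
            not_not.mp fun h => hr (Finset.mem_filter.mpr ⟨hrR, h⟩)]
          ring
      _ = logRatio c z ⬝ᵥ ∑ r ∈ S.G.R, S.detKin.rate r z • (toR r.2 - toR r.1) := by
          simp only [dotProduct_sum, dotProduct_smul, dotProduct_sub, smul_eq_mul, a]
      _ = 0 := by rw [heq, dotProduct_zero]
  have ha := (((Det.complexBalanced_iff_isCirculation _ _).mp hcb).filter_fst
    (p := fun y => ratioMonomial c z y ≠ 0) hiff).forall_eq_of_sum_mul_exp_mul_sub_eq_zero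
    (fun r hr => detKin_rate_pos hc (Finset.mem_filter.mp hr).1) hpair
  intro r hr
  by_cases h1 : ratioMonomial c z r.1 = 0
  · rw [h1, eq_comm, ← not_ne_iff, ← hiff r hr, not_ne_iff, h1]
  · rw [ratioMonomial_eq_exp hc hz h1, ratioMonomial_eq_exp hc hz ((hiff r hr).mp h1)]
    exact congrArg exp (ha r (Finset.mem_filter.mpr ⟨hr, h1⟩))

theorem complexBalanced_of_isEquilibrium (hc : ∀ i, 0 < c i)
    (hcb : Det.ComplexBalanced S.detKin c) (heq : Det.IsEquilibrium S.detKin z) :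
    Det.ComplexBalanced S.detKin z := by
  by_cases hz : ∀ i, 0 ≤ z i
  · exact complexBalanced_of_ratioMonomial_eq hc hcb hz
      (ratioMonomial_fst_eq_snd_of_isEquilibrium hc hcb hz heq)
  · intro y _
    simp [detKin_rate_of_not_nonneg S hz]

theorem logRatio_dotProduct_eq_zero_of_isEquilibrium (hc : ∀ i, 0 < c i)
    (hcb : Det.ComplexBalanced S.detKin c) (hz : ∀ i, 0 < z i)
    (heq : Det.IsEquilibrium S.detKin z) {v : Fin n → ℝ} (hv : v ∈ stoichSubspace S.G) :
    logRatio c z ⬝ᵥ v = 0 :=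
  dotProduct_eq_zero_of_mem_stoichSubspace (fun r hr => (ratioMonomial_fst_eq_snd_iff hc hz r).mp
    (ratioMonomial_fst_eq_snd_of_isEquilibrium hc hcb (fun i => (hz i).le) heq r hr)) hv

theorem eq_of_isEquilibrium_of_sub_mem_stoichSubspace (hc : ∀ i, 0 < c i)
    (hcb : Det.ComplexBalanced S.detKin c) {z₁ z₂ : Fin n → ℝ} (hz₁ : ∀ i, 0 < z₁ i)
    (hz₂ : ∀ i, 0 < z₂ i) (heq₁ : Det.IsEquilibrium S.detKin z₁)
    (heq₂ : Det.IsEquilibrium S.detKin z₂) (hS : z₁ - z₂ ∈ stoichSubspace S.G) :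
    z₁ = z₂ := by
  refine eq_of_sum_log_sub_log_mul_sub_eq_zero hz₁ hz₂ ?_
  calc ∑ i, (log (z₁ i) - log (z₂ i)) * (z₁ i - z₂ i)
      = (logRatio c z₁ - logRatio c z₂) ⬝ᵥ (z₁ - z₂) := by
        refine Finset.sum_congr rfl fun i _ => ?_
        simp only [logRatio, Pi.sub_apply, log_div (hz₁ i).ne' (hc i).ne',
          log_div (hz₂ i).ne' (hc i).ne']
        ring
    _ = 0 := by
        rw [sub_dotProduct, logRatio_dotProduct_eq_zero_of_isEquilibrium hc hcb hz₁ heq₁ hS,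
          logRatio_dotProduct_eq_zero_of_isEquilibrium hc hcb hz₂ heq₂ hS, sub_self]

theorem exists_pos_isEquilibrium_mem_compatClass (hc : ∀ i, 0 < c i)
    (hcb : Det.ComplexBalanced S.detKin c) {v w : Fin n → ℝ} (hw : w ∈ compatClass S.G v)
    (hwpos : ∀ i, 0 < w i) :
    ∃ z ∈ compatClass S.G v, (∀ i, 0 < z i) ∧ Det.IsEquilibrium S.detKin z := by
  obtain ⟨z, hz, hmin⟩ :=
    exists_isMinOn_relEntropy hc (isClosed_compatClass S.G v) (fun x hx => hx.2) ⟨w, hw⟩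
  have hzpos :=
    pos_of_isMinOn_relEntropy hc (convex_compatClass S.G v) (fun x hx => hx.2) hz hmin hw hwpos
  have hcrit : ∀ r ∈ S.G.R, logRatio c z ⬝ᵥ (toR r.2 - toR r.1) = 0 := by
    intro r hr
    refine IsLocalMin.hasDerivAt_eq_zero ?_ (hasDerivAt_relEntropy_add_smul hc hzpos _)
    have hnear : ∀ᶠ t in 𝓝 (0 : ℝ), ∀ i, 0 < (z + t • (toR r.2 - toR r.1)) i :=
      eventually_all.mpr fun i =>
        (Continuous.tendsto' (by fun_prop) 0 (z i) (by simp)).eventually (lt_mem_nhds (hzpos i))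
    filter_upwards [hnear] with t ht
    have hmem : z + t • (toR r.2 - toR r.1) ∈ compatClass S.G v := by
      refine ⟨?_, fun i => (ht i).le⟩
      rw [add_sub_right_comm]
      exact add_mem hz.1 (Submodule.smul_mem _ t (Submodule.subset_span ⟨r, hr, rfl⟩))
    simpa using isMinOn_iff.mp hmin _ hmem
  refine ⟨z, hz, hzpos, (complexBalanced_of_ratioMonomial_eq hc hcb (fun i => (hzpos i).le)
    fun r hr => (ratioMonomial_fst_eq_snd_iff hc hzpos r).mpr (hcrit r hr)).isEquilibrium⟩

end MASystem

end CRN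

/-- If a deterministic mass action system has a positive complex
balanced state, then every positive stoichiometric compatibility class contains exactly
one positive equilibrium, and every equilibrium is complex balanced. -/
theorem mass_action_complex_balanced_existence_uniqueness {n : ℕ} (S : MASystem n)
    (c : Fin n → ℝ) (hc : ∀ i, 0 < c i) (hcb : Det.ComplexBalanced S.detKin c) :
    (∀ v : Fin n → ℝ, (∃ z ∈ compatClass S.G v, ∀ i, 0 < z i) →
      ∃! z : Fin n → ℝ,
        z ∈ compatClass S.G v ∧ (∀ i, 0 < z i) ∧ Det.IsEquilibrium S.detKin z) ∧
    ∀ z : Fin n → ℝ, Det.IsEquilibrium S.detKin z → Det.ComplexBalanced S.detKin z := by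
  refine ⟨fun v ⟨w, hw, hwpos⟩ => ?_, fun z => MASystem.complexBalanced_of_isEquilibrium hc hcb⟩
  obtain ⟨z, hz, hzpos, hzeq⟩ :=
    MASystem.exists_pos_isEquilibrium_mem_compatClass hc hcb hw hwpos
  refine ⟨z, ⟨hz, hzpos, hzeq⟩, fun y ⟨hy, hypos, hyeq⟩ => ?_⟩
  refine MASystem.eq_of_isEquilibrium_of_sub_mem_stoichSubspace hc hcb hypos hzpos hyeq hzeq ?_
  simpa using sub_mem hy.1 hz.1
end
end

section
/- Let (G, Λ) be a stochastic reaction system on n species and let π be a measure on ℤ^n. If π is a reaction balanced measure, or a complex balanced measure, or a reaction vector balanced measure of (G, Λ), then π is a stationary measure of (G, Λ). -/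
open scoped ENNReal NNReal BigOperators Classical

noncomputable section

open CRN

private lemma aux_mem_prod_of_mem_R {n : ℕ} {G : Network n} {r : Reaction n} (hr : r ∈ G.R) :
    r ∈ G.C ×ˢ G.C := by
  rw [Finset.mem_product]
  exact ⟨Finset.mem_union_left _ (Finset.mem_image_of_mem Prod.fst hr),
         Finset.mem_union_right _ (Finset.mem_image_of_mem Prod.snd hr)⟩

private lemma aux_sum_R_eq_sum_CC {n : ℕ} {G : Network n} (f : Reaction n → ℝ≥0∞)
    (hf : ∀ p ∉ G.R, f p = 0) :
    ∑ r ∈ G.R, f r = ∑ p ∈ G.C ×ˢ G.C, f p :=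
  Finset.sum_subset (fun r hr => aux_mem_prod_of_mem_R hr) (fun p _ hp => hf p hp)

private lemma aux_sum_CC_swap {n : ℕ} {G : Network n} (f : Reaction n → ℝ≥0∞) :
    ∑ p ∈ G.C ×ˢ G.C, f (p.2, p.1) = ∑ p ∈ G.C ×ˢ G.C, f p := by
  rw [Finset.sum_product, Finset.sum_comm, ← Finset.sum_product']

/-- Reaction balanced, complex balanced, or reaction vector balanced
measures of a stochastic reaction system are stationary measures. -/
theorem balanced_measures_are_stationary {n : ℕ} {G : Network n} (Λ : StochKin G)
    (π : Meas n)
    (h : Stoch.ReactionBalancedM Λ π ∨ Stoch.ComplexBalancedM Λ π ∨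
      Stoch.RVBalancedM Λ π) :
    Stoch.Stationary Λ π := by
  rcases h with hRB | hCB | hRV
  · -- reaction balanced
    intro x
    rw [Finset.mul_sum]
    rw [aux_sum_R_eq_sum_CC (fun r => π x * (Λ.rate r x : ℝ≥0∞))
      (fun p hp => by simp [Λ.zero_off p hp])]
    rw [aux_sum_R_eq_sum_CC
      (fun r => π (x + toZ r.1 - toZ r.2) * (Λ.rate r (x + toZ r.1 - toZ r.2) : ℝ≥0∞))
      (fun p hp => by simp [Λ.zero_off p hp])]
    rw [← aux_sum_CC_swap
      (fun r => π (x + toZ r.1 - toZ r.2) * (Λ.rate r (x + toZ r.1 - toZ r.2) : ℝ≥0∞))]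
    refine Finset.sum_congr rfl fun p hp => ?_
    rw [Finset.mem_product] at hp
    have := hRB x p.1 hp.1 p.2 hp.2
    simpa using this
  · -- complex balanced
    intro x
    calc π x * ∑ r ∈ G.R, (Λ.rate r x : ℝ≥0∞)
        = π x * ∑ p ∈ G.C ×ˢ G.C, (Λ.rate p x : ℝ≥0∞) := by
          rw [aux_sum_R_eq_sum_CC (fun r => (Λ.rate r x : ℝ≥0∞))
            (fun p hp => by simp [Λ.zero_off p hp])]
      _ = ∑ y ∈ G.C, π x * ∑ y' ∈ G.C, (Λ.rate (y, y') x : ℝ≥0∞) := by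
          rw [Finset.sum_product, Finset.mul_sum]
      _ = ∑ y ∈ G.C, ∑ y' ∈ G.C,
            π (x + toZ y' - toZ y) * (Λ.rate (y', y) (x + toZ y' - toZ y) : ℝ≥0∞) :=
          Finset.sum_congr rfl fun y hy => hCB x y hy
      _ = ∑ p ∈ G.C ×ˢ G.C,
            (fun r : Reaction n =>
              π (x + toZ r.1 - toZ r.2) * (Λ.rate r (x + toZ r.1 - toZ r.2) : ℝ≥0∞))
              (p.2, p.1) := by rw [Finset.sum_product]
      _ = ∑ p ∈ G.C ×ˢ G.C,
            π (x + toZ p.1 - toZ p.2) * (Λ.rate p (x + toZ p.1 - toZ p.2) : ℝ≥0∞) :=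
          aux_sum_CC_swap (fun r : Reaction n =>
            π (x + toZ r.1 - toZ r.2) * (Λ.rate r (x + toZ r.1 - toZ r.2) : ℝ≥0∞))
      _ = ∑ r ∈ G.R,
            π (x + toZ r.1 - toZ r.2) * (Λ.rate r (x + toZ r.1 - toZ r.2) : ℝ≥0∞) :=
          (aux_sum_R_eq_sum_CC _ (fun p hp => by simp [Λ.zero_off p hp])).symm
  · -- reaction vector balanced
    intro x
    have hmem : ∀ r ∈ G.R, (fun r : Reaction n => toZ r.2 - toZ r.1) r ∈
        (G.R.image (fun r : Reaction n => toZ r.2 - toZ r.1) ∪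
          G.R.image (fun r : Reaction n => -(toZ r.2 - toZ r.1))) := fun r hr =>
      Finset.mem_union_left _ (Finset.mem_image_of_mem _ hr)
    set D : Finset (Fin n → ℤ) :=
      G.R.image (fun r : Reaction n => toZ r.2 - toZ r.1) ∪
        G.R.image (fun r : Reaction n => -(toZ r.2 - toZ r.1)) with hD
    have hneg : ∀ ξ ∈ D, -ξ ∈ D := by
      intro ξ hξ
      rw [hD, Finset.mem_union] at hξ ⊢
      rcases hξ with hξ | hξ
      · right
        obtain ⟨r, hr, rfl⟩ := Finset.mem_image.mp hξ
        exact Finset.mem_image_of_mem _ hr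
      · left
        obtain ⟨r, hr, rfl⟩ := Finset.mem_image.mp hξ
        rw [neg_neg]
        exact Finset.mem_image_of_mem _ hr
    have key : ∀ F : (Fin n → ℤ) → ℝ≥0∞, ∑ ξ ∈ D, F ξ = ∑ ξ ∈ D, F (-ξ) := by
      intro F
      refine Finset.sum_nbij' (fun ξ => -ξ) (fun ξ => -ξ) (fun ξ hξ => hneg ξ hξ)
        (fun ξ hξ => hneg ξ hξ) (fun ξ _ => neg_neg ξ) (fun ξ _ => neg_neg ξ)
        (fun ξ _ => by rw [neg_neg])
    calc π x * ∑ r ∈ G.R, (Λ.rate r x : ℝ≥0∞)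
        = ∑ ξ ∈ D, π x * ∑ r ∈ G.R.filter (fun r : Reaction n => toZ r.2 - toZ r.1 = ξ),
            (Λ.rate r x : ℝ≥0∞) := by
          rw [← Finset.mul_sum, Finset.sum_fiberwise_of_maps_to hmem]
      _ = ∑ ξ ∈ D, π (x + ξ) * ∑ r ∈ G.R.filter (fun r : Reaction n => toZ r.2 - toZ r.1 = -ξ),
            (Λ.rate r (x + ξ) : ℝ≥0∞) :=
          Finset.sum_congr rfl fun ξ _ => hRV x ξ
      _ = ∑ ξ ∈ D, π (x + -ξ) * ∑ r ∈ G.R.filter (fun r : Reaction n => toZ r.2 - toZ r.1 = ξ),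
            (Λ.rate r (x + -ξ) : ℝ≥0∞) := by
          rw [key (fun ξ => π (x + ξ) *
            ∑ r ∈ G.R.filter (fun r : Reaction n => toZ r.2 - toZ r.1 = -ξ),
              (Λ.rate r (x + ξ) : ℝ≥0∞))]
          simp only [neg_neg]
      _ = ∑ ξ ∈ D, ∑ r ∈ G.R.filter (fun r : Reaction n => toZ r.2 - toZ r.1 = ξ),
            π (x + toZ r.1 - toZ r.2) * (Λ.rate r (x + toZ r.1 - toZ r.2) : ℝ≥0∞) := by
          refine Finset.sum_congr rfl fun ξ _ => ?_
          rw [Finset.mul_sum]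
          refine Finset.sum_congr rfl fun r hr => ?_
          have hξ : toZ r.2 - toZ r.1 = ξ := (Finset.mem_filter.mp hr).2
          have hx : x + -ξ = x + toZ r.1 - toZ r.2 := by rw [← hξ]; abel
          rw [hx]
      _ = ∑ r ∈ G.R,
            π (x + toZ r.1 - toZ r.2) * (Λ.rate r (x + toZ r.1 - toZ r.2) : ℝ≥0∞) :=
          Finset.sum_fiberwise_of_maps_to hmem _
end
end

section
/- Let (G, Λ) be a stochastic reaction system on n species having at least one active irreducible component. If there exists a cycle balanced stationary distribution π of (G, Λ) with supp(π) = ℤ^n, then (G, Λ) is a cycle balanced stochastic reaction system, i.e. every stationary distribution of (G, Λ) within an active irreducible component is cycle balanced. -/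
open scoped ENNReal NNReal BigOperators Classical

noncomputable section

open CRN

/-- Reindexing a product over `range j` by the cyclic shift `i ↦ (i+1) % j`. -/
lemma prod_cycle_shift {M : Type*} [CommMonoid M] (j : ℕ) (hj : 0 < j) (f : ℕ → M) :
    ∏ i ∈ Finset.range j, f ((i + 1) % j) = ∏ i ∈ Finset.range j, f i := by
  refine Finset.prod_nbij' (fun i => (i + 1) % j) (fun i => (i + (j - 1)) % j)
    (fun a ha => Finset.mem_range.mpr (Nat.mod_lt _ hj))
    (fun a ha => Finset.mem_range.mpr (Nat.mod_lt _ hj)) ?_ ?_ ?_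
  · intro a ha
    have ha' := Finset.mem_range.mp ha
    show ((a + 1) % j + (j - 1)) % j = a
    rw [Nat.mod_add_mod]
    have h1 : a + 1 + (j - 1) = a + j := by omega
    rw [h1, Nat.add_mod_right, Nat.mod_eq_of_lt ha']
  · intro a ha
    have ha' := Finset.mem_range.mp ha
    show ((a + (j - 1)) % j + 1) % j = a
    rw [Nat.mod_add_mod]
    have h1 : a + (j - 1) + 1 = a + j := by omega
    rw [h1, Nat.add_mod_right, Nat.mod_eq_of_lt ha']
  · intro a ha; rfl

/-- If a stochastic reaction system with at least one active
irreducible component has a cycle balanced stationary distribution with full support,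
then the system is cycle balanced: every stationary distribution within an active
irreducible component is cycle balanced. -/
theorem full_support_cycle_balanced_implies_system_cycle_balanced {n : ℕ}
    {G : Network n} (Λ : StochKin G)
    (hactive : ∃ Γ, Stoch.IrredComp Λ Γ ∧ Stoch.ActiveSet Λ Γ)
    (π : Meas n) (hdist : Stoch.IsDistribution π) (hstat : Stoch.Stationary Λ π)
    (hcyc : Stoch.CycleBalancedM Λ π) (hsupp : Stoch.supp π = Set.univ) :
    ∀ π' : Meas n, ∀ Γ : Set (Fin n → ℤ),
      Stoch.StationaryDistribution Λ π' → Stoch.IrredComp Λ Γ →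
      Stoch.ActiveSet Λ Γ → Stoch.Within π' Γ → Stoch.CycleBalancedM Λ π' := by
  intro π' Γ _ _ _ _ x j hj ys hysC hysinj
  have hjpos : 0 < j := by omega
  -- π is everywhere positive and finite
  have hπ0 : ∀ z, π z ≠ 0 := by
    intro z
    have : z ∈ Stoch.supp π := by rw [hsupp]; trivial
    exact this
  have hπtop : ∀ z, π z ≠ ⊤ := by
    intro z
    have hle : π z ≤ ∑' w, π w := ENNReal.le_tsum z
    rw [hdist] at hle
    exact ne_top_of_le_ne_top ENNReal.one_ne_top hle
  -- abbreviations
  set A : ℝ≥0∞ :=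
    ∏ i ∈ Finset.range j, (Λ.rate (ys i, ys ((i + 1) % j)) (x + toZ (ys i)) : ℝ≥0∞) with hA
  set B : ℝ≥0∞ :=
    ∏ i ∈ Finset.range j,
      (Λ.rate (ys ((i + 1) % j), ys i) (x + toZ (ys ((i + 1) % j))) : ℝ≥0∞) with hB
  set C : ℝ≥0∞ := ∏ i ∈ Finset.range j, π (x + toZ (ys i)) with hC
  have hshiftπ : ∏ i ∈ Finset.range j, π (x + toZ (ys ((i + 1) % j))) = C := by
    rw [hC]
    exact prod_cycle_shift j hjpos (fun i => π (x + toZ (ys i)))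
  -- from cycle balance of π, cancel to get A = B
  have key := hcyc x j hj ys hysC hysinj
  rw [Finset.prod_mul_distrib, Finset.prod_mul_distrib, hshiftπ, ← hA, ← hB] at key
  have hC0 : C ≠ 0 := by
    rw [hC, Finset.prod_ne_zero_iff]
    exact fun i _ => hπ0 _
  have hCtop : C ≠ ⊤ := by
    rw [hC]
    exact (ENNReal.prod_lt_top (fun i _ => lt_top_iff_ne_top.mpr (hπtop _))).ne
  have hAB : A = B := (ENNReal.mul_right_inj hC0 hCtop).mp key
  -- now conclude for π'
  have hshiftπ' : ∏ i ∈ Finset.range j, π' (x + toZ (ys ((i + 1) % j))) =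
      ∏ i ∈ Finset.range j, π' (x + toZ (ys i)) :=
    prod_cycle_shift j hjpos (fun i => π' (x + toZ (ys i)))
  rw [Finset.prod_mul_distrib, Finset.prod_mul_distrib, hshiftπ', ← hA, ← hB, hAB]
end
end
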